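/- Let H be a connected hypergraph with minimal edge cut F, {V_i : i ∈ I} a partition of V(H) into unions of vertex sets of connected components of H \ F, and suppose H has an Euler family \mathcal{F}. Define α: F → I^[2] by α(f) = ij if f is traversed in \mathcal{F} via a vertex in V_i and a vertex in V_j. Then α is an edge cut assignment and H^α has an Euler family obtained from \mathcal{F} by replacing each f ∈ F with f^α. -/

import Mathlib

set_option linter.unusedSectionVars false

universe u

variable {V : Type u} {β : Type u} {I : Type u}

/-- A hypergraph on vertex type `V` with edge-index type `β`: a finite vertex set,
a finite (multi)set of edges indexed by `β`, and an incidence map giving the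
vertex set of each edge. -/
structure HGraph (V β : Type u) [DecidableEq V] where
  verts : Finset V
  edges : Finset β
  inc : β → Finset V
  inc_sub : ∀ e ∈ edges, inc e ⊆ verts

namespace HGraph

variable [DecidableEq V] [DecidableEq β] [DecidableEq I]

/-- A walk in a hypergraph: an alternating sequence of vertices and edges,
consecutive vertices being distinct and both contained in the intervening edge. -/
inductive Walk (H : HGraph V β) : V → V → Type u where
  | nil (v : V) (hv : v ∈ H.verts) : Walk H v v
  | cons (u v w : V) (e : β) (he : e ∈ H.edges) (hu : u ∈ H.inc e) (hv : v ∈ H.inc e)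
      (hne : u ≠ v) (p : Walk H v w) : Walk H u w

namespace Walk

/-- The list of steps `(v_{i-1}, e_i, v_i)` of a walk. -/
def steps {H : HGraph V β} : ∀ {u v : V}, H.Walk u v → List (V × β × V)
  | _, _, .nil _ _ => []
  | _, _, .cons u a _ e _ _ _ _ p => (u, e, a) :: p.steps

/-- The list of edges traversed by a walk, in order. -/
def edgeList {H : HGraph V β} {u v : V} (w : H.Walk u v) : List β :=
  w.steps.map (fun s => s.2.1)

/-- The anchors of a walk: the vertices appearing in its sequence. -/
def anchors {H : HGraph V β} {u v : V} (w : H.Walk u v) : List V :=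
  u :: w.steps.map (fun s => s.2.2)

end Walk

/-- A closed trail: a closed walk of length at least 2 with pairwise distinct edges. -/
structure ClosedTrail (H : HGraph V β) where
  base : V
  walk : H.Walk base base
  two_le : 2 ≤ walk.edgeList.length
  nodup : walk.edgeList.Nodup

/-- The closed trail `T` traverses the vertex `u` via the edge `e`, i.e. `eu` or `ue`
is a subsequence of the walk. -/
def ClosedTrail.traverses {H : HGraph V β} (T : H.ClosedTrail) (u : V) (e : β) : Prop :=
  ∃ s ∈ T.walk.steps, s.2.1 = e ∧ (s.1 = u ∨ s.2.2 = u)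

/-- An Euler family: a family of pairwise edge-disjoint and anchor-disjoint closed
trails jointly traversing every edge exactly once. -/
def IsEulerFamily (H : HGraph V β) {κ : Type} (T : κ → H.ClosedTrail) : Prop :=
  (∀ k l, k ≠ l → ∀ e, e ∈ (T k).walk.edgeList → e ∉ (T l).walk.edgeList) ∧
  (∀ k l, k ≠ l → ∀ v, v ∈ (T k).walk.anchors → v ∉ (T l).walk.anchors) ∧
  (∀ e ∈ H.edges, ∃ k, e ∈ (T k).walk.edgeList)

def HasEulerFamily (H : HGraph V β) : Prop :=
  ∃ (κ : Type) (T : κ → H.ClosedTrail), H.IsEulerFamily T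

/-- A non-empty Euler family. -/
def HasNonemptyEulerFamily (H : HGraph V β) : Prop :=
  ∃ (κ : Type) (T : κ → H.ClosedTrail), Nonempty κ ∧ H.IsEulerFamily T

/-- An Euler family is spanning if every vertex is an anchor of some trail in it. -/
def IsSpanningFamily (H : HGraph V β) {κ : Type} (T : κ → H.ClosedTrail) : Prop :=
  ∀ v ∈ H.verts, ∃ k, v ∈ (T k).walk.anchors

/-- An Euler tour: a closed trail traversing every edge (exactly once). -/
def IsEulerTour (H : HGraph V β) (T : H.ClosedTrail) : Prop :=
  ∀ e ∈ H.edges, e ∈ T.walk.edgeList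

def HasEulerTour (H : HGraph V β) : Prop := ∃ T : H.ClosedTrail, H.IsEulerTour T

/-- A hypergraph is connected if every two vertices are joined by a walk. -/
def Connected (H : HGraph V β) : Prop :=
  ∀ u ∈ H.verts, ∀ v ∈ H.verts, Nonempty (H.Walk u v)

/-- `H \ F` : deletion of the edges in `F`. -/
def edel (H : HGraph V β) (F : Finset β) : HGraph V β where
  verts := H.verts
  edges := H.edges \ F
  inc := H.inc
  inc_sub := fun e he => H.inc_sub e (Finset.mem_sdiff.mp he).1

/-- The subhypergraph induced by a vertex set `U`. -/
def induce (H : HGraph V β) (U : Finset V) : HGraph V β where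
  verts := U
  edges := H.edges.filter (fun e => (H.inc e ∩ U).Nonempty)
  inc := fun e => H.inc e ∩ U
  inc_sub := fun _ _ => Finset.inter_subset_right

/-- The degree of a vertex: the number of edges incident with it. -/
def degree (H : HGraph V β) (v : V) : ℕ :=
  (H.edges.filter (fun e => v ∈ H.inc e)).card

/-- `[S, V - S]_H` : the set of edges meeting both `S` and its complement. -/
def cutSet (H : HGraph V β) (S : Finset V) : Finset β :=
  H.edges.filter (fun e => (H.inc e ∩ S).Nonempty ∧ (H.inc e ∩ (H.verts \ S)).Nonempty)

/-- An edge cut: a set of edges of the form `[S, V - S]_H` for nonempty proper `S`. -/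
def IsEdgeCut (H : HGraph V β) (F : Finset β) : Prop :=
  ∃ S : Finset V, S ⊆ H.verts ∧ S.Nonempty ∧ S ≠ H.verts ∧ F = H.cutSet S

/-- A minimal edge cut: an edge cut no proper subset of which is an edge cut. -/
def IsMinimalEdgeCut (H : HGraph V β) (F : Finset β) : Prop :=
  H.IsEdgeCut F ∧ ∀ F' ⊂ F, ¬ H.IsEdgeCut F'

/-- `C` is the vertex set of a connected component of `H` : nonempty, connected as an
induced subhypergraph, and closed under the edges of `H`. -/
def IsComponent (H : HGraph V β) (C : Finset V) : Prop :=
  C.Nonempty ∧ C ⊆ H.verts ∧ (H.induce C).Connected ∧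
    ∀ e ∈ H.edges, (H.inc e ∩ C).Nonempty → H.inc e ⊆ C

/-- `P` is a partition of `V(H)` into unions of the vertex sets of the connected
components of `H \ F`. -/
def IsCompUnionPartition (H : HGraph V β) (F : Finset β) (P : I → Finset V) : Prop :=
  (∀ i, (P i).Nonempty) ∧ (∀ i, P i ⊆ H.verts) ∧ (∀ v ∈ H.verts, ∃! i, v ∈ P i) ∧
    ∀ e ∈ H.edges, e ∉ F → ∀ i, (H.inc e ∩ P i).Nonempty → H.inc e ⊆ P i

/-- `P` lists exactly the vertex sets of the connected components of `H \ F`. -/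
def IsComponentPartition (H : HGraph V β) (F : Finset β) (P : I → Finset V) : Prop :=
  H.IsCompUnionPartition F P ∧ ∀ i, ((H.edel F).induce (P i)).Connected

/-- The union `P i ∪ P j` associated with an unordered pair. -/
def pairFinset (P : I → Finset V) : Sym2 I → Finset V :=
  Sym2.lift ⟨fun i j => P i ∪ P j, fun _ _ => Finset.union_comm _ _⟩

/-- `α : F → I^[2]` is an edge cut assignment. -/
def IsECA (H : HGraph V β) (F : Finset β) (P : I → Finset V) (α : β → Sym2 I) : Prop :=
  ∀ f ∈ F, ∀ i j, α f = s(i, j) →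
    (H.inc f ∩ P i).Nonempty ∧ (H.inc f ∩ P j).Nonempty ∧
      (i = j → 2 ≤ (H.inc f ∩ P i).card)

/-- The hypergraph `H^α` associated with an edge cut assignment `α`:
each `f ∈ F` is replaced by `f^α = f ∩ (V_i ∪ V_j)` where `α f = ij`. -/
def assign (H : HGraph V β) (F : Finset β) (P : I → Finset V) (α : β → Sym2 I) :
    HGraph V β where
  verts := H.verts
  edges := H.edges
  inc := fun e => if e ∈ F then H.inc e ∩ pairFinset P (α e) else H.inc e
  inc_sub := by
    intro e he
    split
    · exact Finset.inter_subset_left.trans (H.inc_sub e he)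
    · exact H.inc_sub e he

/-- The multigraph `G^α` associated with an edge cut assignment `α`, viewed as a
hypergraph on the vertex set `I` whose edges (indexed by `F`) are the pairs `α f`. -/
def assignGraph [Fintype I] (F : Finset β) (α : β → Sym2 I) : HGraph I β where
  verts := Finset.univ
  edges := F
  inc := fun f => Sym2.lift ⟨fun i j => ({i, j} : Finset I), fun _ _ => Finset.pair_comm _ _⟩ (α f)
  inc_sub := fun _ _ => fun _ _ => Finset.mem_univ _

/-- The collapsed hypergraph `H ∘ S` with collapsed vertex `uc`. -/
def collapse (H : HGraph V β) (S : Finset V) (uc : V) : HGraph V β where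
  verts := (H.verts \ S) ∪ {uc}
  edges := H.edges.filter (fun e => (H.inc e ∩ (H.verts \ S)).Nonempty)
  inc := fun e => if (H.inc e ∩ S).Nonempty then (H.inc e \ S) ∪ {uc} else H.inc e
  inc_sub := by
    intro e he
    rw [Finset.mem_filter] at he
    split
    · intro x hx
      rcases Finset.mem_union.mp hx with h | h
      · exact Finset.mem_union_left _
          (Finset.mem_sdiff.mpr ⟨H.inc_sub e he.1 (Finset.mem_sdiff.mp h).1,
            (Finset.mem_sdiff.mp h).2⟩)
      · exact Finset.mem_union_right _ h
    · intro x hx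
      rename_i h
      exact Finset.mem_union_left _ (Finset.mem_sdiff.mpr
        ⟨H.inc_sub e he.1 hx, fun hxS => h ⟨x, Finset.mem_inter.mpr ⟨hx, hxS⟩⟩⟩)

/-- Lifting a walk along an inclusion of hypergraphs. -/
def Walk.lift {H1 H2 : HGraph V β} (hv : H1.verts ⊆ H2.verts) (he : H1.edges ⊆ H2.edges)
    (hi : ∀ e ∈ H1.edges, H1.inc e ⊆ H2.inc e) : ∀ {u v : V}, H1.Walk u v → H2.Walk u v
  | _, _, .nil x hx => .nil x (hv hx)
  | _, _, .cons u a w e hee hu hvv hne p =>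
      .cons u a w e (he hee) (hi e hee hu) (hi e hee hvv) hne (Walk.lift hv he hi p)

theorem Walk.steps_lift {H1 H2 : HGraph V β} (hv : H1.verts ⊆ H2.verts)
    (he : H1.edges ⊆ H2.edges) (hi : ∀ e ∈ H1.edges, H1.inc e ⊆ H2.inc e)
    {u v : V} (w : H1.Walk u v) : (w.lift hv he hi).steps = w.steps := by
  induction w with
  | nil => rfl
  | cons u a w e hee hu hvv hne p ih => simp [Walk.lift, Walk.steps, ih]

theorem Walk.edgeList_lift {H1 H2 : HGraph V β} (hv : H1.verts ⊆ H2.verts)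
    (he : H1.edges ⊆ H2.edges) (hi : ∀ e ∈ H1.edges, H1.inc e ⊆ H2.inc e)
    {u v : V} (w : H1.Walk u v) : (w.lift hv he hi).edgeList = w.edgeList := by
  simp [Walk.edgeList, Walk.steps_lift]

theorem Walk.anchors_lift {H1 H2 : HGraph V β} (hv : H1.verts ⊆ H2.verts)
    (he : H1.edges ⊆ H2.edges) (hi : ∀ e ∈ H1.edges, H1.inc e ⊆ H2.inc e)
    {u v : V} (w : H1.Walk u v) : (w.lift hv he hi).anchors = w.anchors := by
  simp [Walk.anchors, Walk.steps_lift]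

/-- Lifting a closed trail along an inclusion of hypergraphs. -/
def ClosedTrail.lift {H1 H2 : HGraph V β} (hv : H1.verts ⊆ H2.verts)
    (he : H1.edges ⊆ H2.edges) (hi : ∀ e ∈ H1.edges, H1.inc e ⊆ H2.inc e)
    (T : H1.ClosedTrail) : H2.ClosedTrail where
  base := T.base
  walk := T.walk.lift hv he hi
  two_le := by rw [Walk.edgeList_lift]; exact T.two_le
  nodup := by rw [Walk.edgeList_lift]; exact T.nodup

theorem Walk.step_spec {H : HGraph V β} : ∀ {u v : V} (w : H.Walk u v),
    ∀ s ∈ w.steps, s.2.1 ∈ H.edges ∧ s.1 ∈ H.inc s.2.1 ∧ s.2.2 ∈ H.inc s.2.1 ∧ s.1 ≠ s.2.2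
  | _, _, .nil _ _ => by simp [Walk.steps]
  | _, _, .cons u a w e he hu hv hne p => by
      intro s hs
      rcases List.mem_cons.mp hs with rfl | hs
      · exact ⟨he, hu, hv, hne⟩
      · exact p.step_spec s hs

/-- Transfer a walk in `H` to a walk in `H.assign F P α` with the same steps,
provided each step with edge in `F` has both anchors in the corresponding pair set. -/
def Walk.toAssign {H : HGraph V β} (F : Finset β) (P : I → Finset V) (α : β → Sym2 I) :
    ∀ {u v : V} (w : H.Walk u v),
    (∀ s ∈ w.steps, s.2.1 ∈ F →
        s.1 ∈ pairFinset P (α s.2.1) ∧ s.2.2 ∈ pairFinset P (α s.2.1)) →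
    {w' : (H.assign F P α).Walk u v // w'.steps = w.steps}
  | _, _, .nil x hx, _ => ⟨.nil x hx, rfl⟩
  | _, _, .cons u a v e he hu hv hne p, h => by
      obtain ⟨p', hp'⟩ := p.toAssign F P α (fun s hs => h s (List.mem_cons_of_mem _ hs))
      have hu' : u ∈ (H.assign F P α).inc e := by
        show u ∈ (if e ∈ F then H.inc e ∩ pairFinset P (α e) else H.inc e)
        split
        · next hFe => exact Finset.mem_inter.mpr ⟨hu, (h _ (List.mem_cons_self) hFe).1⟩
        · exact hu
      have hv' : a ∈ (H.assign F P α).inc e := by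
        show a ∈ (if e ∈ F then H.inc e ∩ pairFinset P (α e) else H.inc e)
        split
        · next hFe => exact Finset.mem_inter.mpr ⟨hv, (h _ (List.mem_cons_self) hFe).2⟩
        · exact hv
      exact ⟨.cons u a v e he hu' hv' hne p', by simp [Walk.steps, hp']⟩


end HGraph
open HGraph in
/-- Lemma 4.3(i): if `H` has an Euler family `T` and `α(f) = ij` whenever `f ∈ F` is
traversed via a vertex of `V_i` and a vertex of `V_j`, then `α` is an edge cut assignment
and `H^α` has an Euler family obtained by replacing each `f ∈ F` with `f^α`. -/
theorem assign_hasEulerFamily_of_eulerFamily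
    {V β I : Type} [DecidableEq V] [DecidableEq β] [DecidableEq I]
    (H : HGraph V β) (F : Finset β) (P : I → Finset V)
    (hH : H.Connected) (hF : H.IsMinimalEdgeCut F)
    (hP : H.IsCompUnionPartition F P)
    {κ : Type} (T : κ → H.ClosedTrail) (hT : H.IsEulerFamily T)
    (α : β → Sym2 I)
    (hα : ∀ f ∈ F, ∀ k, ∀ s ∈ (T k).walk.steps, s.2.1 = f →
      ∃ i j, α f = s(i, j) ∧ s.1 ∈ P i ∧ s.2.2 ∈ P j) :
    H.IsECA F P α ∧
    ∃ T' : κ → (H.assign F P α).ClosedTrail, (H.assign F P α).IsEulerFamily T' ∧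
      ∀ k, (T' k).walk.anchors = (T k).walk.anchors ∧
        (T' k).walk.edgeList = (T k).walk.edgeList := by
  have hFsub : F ⊆ H.edges := by
    obtain ⟨S, _, _, _, rfl⟩ := hF.1
    exact Finset.filter_subset _ _
  constructor
  · intro f hf i j hij
    obtain ⟨k, hk⟩ := hT.2.2 f (hFsub hf)
    obtain ⟨s, hs, hsf⟩ := List.mem_map.mp hk
    obtain ⟨i₀, j₀, hα0, hu, hv⟩ := hα f hf k s hs hsf
    obtain ⟨-, hu', hv', hne⟩ := (T k).walk.step_spec s hs
    rw [hsf] at hu' hv'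
    rw [hα0] at hij
    rcases Sym2.eq_iff.mp hij with ⟨rfl, rfl⟩ | ⟨rfl, rfl⟩
    · refine ⟨⟨s.1, Finset.mem_inter.mpr ⟨hu', hu⟩⟩,
        ⟨s.2.2, Finset.mem_inter.mpr ⟨hv', hv⟩⟩, fun hji => ?_⟩
      subst hji
      exact Finset.one_lt_card.mpr ⟨s.1, Finset.mem_inter.mpr ⟨hu', hu⟩,
        s.2.2, Finset.mem_inter.mpr ⟨hv', hv⟩, hne⟩
    · refine ⟨⟨s.2.2, Finset.mem_inter.mpr ⟨hv', hv⟩⟩,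
        ⟨s.1, Finset.mem_inter.mpr ⟨hu', hu⟩⟩, fun hji => ?_⟩
      subst hji
      exact Finset.one_lt_card.mpr ⟨s.1, Finset.mem_inter.mpr ⟨hu', hu⟩,
        s.2.2, Finset.mem_inter.mpr ⟨hv', hv⟩, hne⟩
  · have hanchor : ∀ k, ∀ s ∈ (T k).walk.steps, s.2.1 ∈ F →
        s.1 ∈ pairFinset P (α s.2.1) ∧ s.2.2 ∈ pairFinset P (α s.2.1) := by
      intro k s hs hsF
      obtain ⟨i, j, heq, hi, hj⟩ := hα s.2.1 hsF k s hs rfl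
      rw [heq]
      simp only [pairFinset, Sym2.lift_mk, Finset.mem_union]
      exact ⟨Or.inl hi, Or.inr hj⟩
    have hsteps : ∀ k,
        (((T k).walk.toAssign F P α (hanchor k)).1).steps = (T k).walk.steps :=
      fun k => ((T k).walk.toAssign F P α (hanchor k)).2
    have hedge : ∀ k, (((T k).walk.toAssign F P α (hanchor k)).1).edgeList
        = (T k).walk.edgeList := by
      intro k; simp [HGraph.Walk.edgeList, hsteps k]
    have hanch : ∀ k, (((T k).walk.toAssign F P α (hanchor k)).1).anchors
        = (T k).walk.anchors := by
      intro k; simp [HGraph.Walk.anchors, hsteps k]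
    refine ⟨fun k => ⟨(T k).base, ((T k).walk.toAssign F P α (hanchor k)).1,
      by rw [hedge k]; exact (T k).two_le, by rw [hedge k]; exact (T k).nodup⟩,
      ⟨?_, ?_, ?_⟩, fun k => ⟨hanch k, hedge k⟩⟩
    · intro k l hkl e hek
      rw [hedge k] at hek
      rw [hedge l]
      exact hT.1 k l hkl e hek
    · intro k l hkl v hvk
      rw [hanch k] at hvk
      rw [hanch l]
      exact hT.2.1 k l hkl v hvk
    · intro e he
      obtain ⟨k, hk⟩ := hT.2.2 e he
      exact ⟨k, by rw [hedge k]; exact hk⟩
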